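/- (Limiting variance ratio for the symmetric blockmodel) Consider the two-class blockmodel with π = 1/2, β = α, γ = xα for some x > 0, x ≠ 1. In the semi-sparse regime (α → 0 with log n/(nα) → 0), the ratio of normalized to unnormalized within-class variance converges: d̃₁₁²/d̂₁₁² → 1/4 + (3/2)·x/(1+x²) in probability. This limit is strictly less than 1 for all x > 0: indeed 1/4 + (3/2)·x/(1+x²) ≤ 1/4 + 3/4 = 1, with equality only at x = 1 (which is excluded). -/

import Mathlib

/-! Both asymptotic formulas are `2 / (n² α)` times a rational function of `α` (for fixed `x`),
so the ratio of the variances is asymptotically the ratio of these two rational functions, which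
is continuous at `α = 0` with value `1/4 + (3/2)·x/(1+x²)`. That this is `< 1` is `(x - 1)² > 0`. -/

open MeasureTheory Filter Finset

noncomputable section

def TendstoInProb {Ω : Type*} [MeasurableSpace Ω] (μ : Measure Ω)
    (X : ℕ → Ω → ℝ) (c : ℝ) : Prop :=
  ∀ ε : ℝ, 0 < ε → Tendsto (fun n => μ {ω | ε ≤ |X n ω - c|}) atTop (nhds 0)

open Topology

lemma exists_pos_abs_mul_div_sub_lt (L : ℝ) {ε : ℝ} (hε : 0 < ε) :
    ∃ δ > 0, ∀ u c v : ℝ, |u - 1| < δ → |c - L| < δ → |v - 1| < δ → |u * c / v - L| < ε := by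
  have hcont : ContinuousAt (fun p : ℝ × ℝ × ℝ => p.1 * p.2.1 / p.2.2) (1, L, 1) :=
    (continuousAt_fst.mul continuousAt_snd.fst).div continuousAt_snd.snd one_ne_zero
  obtain ⟨δ, hδ, hclose⟩ := Metric.continuousAt_iff.mp hcont ε hε
  refine ⟨δ, hδ, fun u c v hu hc hv => ?_⟩
  simpa [Real.dist_eq] using
    hclose (x := (u, c, v)) (by simp [Prod.dist_eq, Real.dist_eq, hu, hc, hv])

theorem TendstoInProb.div_of_asymptotic {Ω : Type*} [MeasurableSpace Ω] {μ : Measure Ω}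
    {X Y : ℕ → Ω → ℝ} {A B : ℕ → ℝ} {L : ℝ}
    (hX : TendstoInProb μ (fun n ω => X n ω / A n) 1)
    (hY : TendstoInProb μ (fun n ω => Y n ω / B n) 1)
    (hAB : Tendsto (fun n => A n / B n) atTop (𝓝 L)) :
    TendstoInProb μ (fun n ω => X n ω / Y n ω) L := by
  intro ε hε
  obtain ⟨δ, hδ, hclose⟩ := exists_pos_abs_mul_div_sub_lt L hε
  set η := min δ 1
  have hη : 0 < η := lt_min hδ one_pos
  have hsub : ∀ᶠ n in atTop, {ω | ε ≤ |X n ω / Y n ω - L|} ⊆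
      {ω | η ≤ |X n ω / A n - 1|} ∪ {ω | η ≤ |Y n ω / B n - 1|} := by
    filter_upwards [Metric.tendsto_nhds.mp hAB η hη] with n hn ω hω
    by_contra hfar
    simp only [Set.mem_union, Set.mem_ofPred_eq, not_or, not_le] at hfar
    obtain ⟨hu, hv⟩ := hfar
    have hu0 : 0 < X n ω / A n := by linarith [(abs_lt.mp hu).1, min_le_right δ 1]
    have hv0 : 0 < Y n ω / B n := by linarith [(abs_lt.mp hv).1, min_le_right δ 1]
    obtain ⟨hX0, hA0⟩ := div_ne_zero_iff.mp hu0.ne'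
    obtain ⟨hY0, hB0⟩ := div_ne_zero_iff.mp hv0.ne'
    have hfactor : X n ω / Y n ω = X n ω / A n * (A n / B n) / (Y n ω / B n) := by
      field_simp
    replace hω : ε ≤ |X n ω / Y n ω - L| := hω
    rw [hfactor] at hω
    exact hω.not_gt (hclose _ _ _ (hu.trans_le (min_le_left _ _)) (hn.trans_le (min_le_left _ _))
      (hv.trans_le (min_le_left _ _)))
  have hsum := (hX η hη).add (hY η hη)
  rw [add_zero] at hsum
  exact tendsto_of_tendsto_of_tendsto_of_le_of_le' tendsto_const_nhds hsum
    (Eventually.of_forall fun n => zero_le)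
    (hsub.mono fun n h => (measure_mono h).trans (measure_union_le _ _))

section Coefficients

/- For `γ = x a` the asymptotic formulas for `d̂₁₁²` and `d̃₁₁²` are `2 / (n² a)` times
`hatCoeff x a` and `tildeCoeff x a` respectively. -/
def hatCoeff (x a : ℝ) : ℝ :=
  (1 / (1 + x) ^ 2 + 1 / (1 - x) ^ 2) * ((1 - a) + x * (1 - x * a))

def tildeCoeff (x a : ℝ) : ℝ :=
  2 / (1 + x) ^ 2 * ((1 - a) * (1 / 4 + x * (1 + x) / (1 - x) ^ 2) +
    x / 2 * (1 - x * a) * (1 / 2 + 2 * (1 + x) / (1 - x) ^ 2))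

variable {n a x : ℝ}

lemma hat_formula_eq :
    ((1 / n) / (n * (a + x * a) / 2) ^ 2 + (1 / n) / (n * (a - x * a) / 2) ^ 2) *
        (n / 2 * (a * (1 - a))) +
      ((1 / n) / (n * (a + x * a) / 2) ^ 2 + (1 / n) / (n * (a - x * a) / 2) ^ 2) *
        (n / 2 * (x * a * (1 - x * a))) =
    2 / (n ^ 2 * a) * hatCoeff x a := by
  rw [hatCoeff]
  field_simp

lemma tilde_formula_eq (ha : a ≠ 0) :
    (n * (1 / 2) * (a * (1 - a))) / (n ^ 3 * (1 / 2) * (a * (1 + x) / 2) ^ 2) *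
        (1 / 4 + (1 / 2) * (x * a) / (a * (1 + x) / 2 * ((1 - x) / (1 + x)) ^ 2)) +
      (n * (1 / 2) * (x * a * (1 - x * a))) / (n ^ 3 * (a * (1 + x) / 2) ^ 2) *
        (1 / (4 * (1 / 2)) +
          (1 / 2) * a / ((1 / 2) * (a * (1 + x) / 2) * ((1 - x) / (1 + x)) ^ 2)) =
    2 / (n ^ 2 * a) * tildeCoeff x a := by
  rw [tildeCoeff]
  field_simp
  ring

lemma hatCoeff_zero (hx : 1 + x ≠ 0) (hx' : 1 - x ≠ 0) :
    hatCoeff x 0 = 2 * (1 + x ^ 2) / ((1 + x) * (1 - x) ^ 2) := by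
  rw [hatCoeff]
  field_simp
  ring

lemma tildeCoeff_zero (hx : 1 + x ≠ 0) (hx' : 1 - x ≠ 0) :
    tildeCoeff x 0 = (1 + 6 * x + x ^ 2) / (2 * (1 + x) * (1 - x) ^ 2) := by
  rw [tildeCoeff]
  field_simp
  ring

lemma tendsto_tildeCoeff_div_hatCoeff (hx : 1 + x ≠ 0) (hx' : 1 - x ≠ 0) :
    Tendsto (fun a => tildeCoeff x a / hatCoeff x a) (𝓝 0)
      (𝓝 (1 / 4 + 3 / 2 * (x / (1 + x ^ 2)))) := by
  have hhat : hatCoeff x 0 ≠ 0 := by rw [hatCoeff_zero hx hx']; positivity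
  have hlim : tildeCoeff x 0 / hatCoeff x 0 = 1 / 4 + 3 / 2 * (x / (1 + x ^ 2)) := by
    rw [tildeCoeff_zero hx hx', hatCoeff_zero hx hx']
    field_simp
    ring
  rw [← hlim]
  exact ((by unfold tildeCoeff; fun_prop : Continuous (tildeCoeff x)).continuousAt.div
    (by unfold hatCoeff; fun_prop : Continuous (hatCoeff x)).continuousAt hhat).tendsto

end Coefficients

lemma div_one_add_sq_lt_half {t : ℝ} (ht : t ≠ 1) : t / (1 + t ^ 2) < 1 / 2 := by
  have hpos : 0 < (t - 1) ^ 2 := by positivity [sub_ne_zero.mpr ht]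
  rw [div_lt_iff₀ (by positivity)]
  nlinarith

theorem limiting_variance_ratio_symmetric_blockmodel_general
    {Ω : Type*} [MeasurableSpace Ω] (μ : Measure Ω)
    (x : ℝ) (hx : 0 < x) (hx1 : x ≠ 1)
    (α : ℕ → ℝ) (hαpos : ∀ n, 0 < α n)
    (hα0 : Tendsto α atTop (nhds 0))
    (γ : ℕ → ℝ) (hγ : ∀ n, γ n = x * α n)
    -- population eigenvalues and normalized-model parameters for `π = 1/2`, `β = α`
    (lam1 lam2 μ1 ν2 : ℕ → ℝ)
    (hlam1 : ∀ n : ℕ, lam1 n = (n : ℝ) * (α n + γ n) / 2)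
    (hlam2 : ∀ n : ℕ, lam2 n = (n : ℝ) * (α n - γ n) / 2)
    (hμ1 : ∀ n, μ1 n = α n * (1 + x) / 2)
    (hν2 : ∀ n, ν2 n = (1 - x) / (1 + x))
    -- the within-class variances of the two spectral embeddings, with their
    -- asymptotic formulas (the conclusions of the unnormalized/normalized theorems)
    (D11hat D11til : ℕ → Ω → ℝ)
    (hhat : TendstoInProb μ (fun n ω => D11hat n ω /
      (((1 / (n : ℝ)) / lam1 n ^ 2 + (1 / (n : ℝ)) / lam2 n ^ 2) *
          ((n : ℝ) / 2 * (α n * (1 - α n))) +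
        ((1 / (n : ℝ)) / lam1 n ^ 2 + (1 / (n : ℝ)) / lam2 n ^ 2) *
          ((n : ℝ) / 2 * (γ n * (1 - γ n))))) 1)
    (htil : TendstoInProb μ (fun n ω => D11til n ω /
      (((n : ℝ) * (1 / 2) * (α n * (1 - α n))) / ((n : ℝ) ^ 3 * (1 / 2) * μ1 n ^ 2) *
          (1 / 4 + (1 / 2) * γ n / (μ1 n * ν2 n ^ 2)) +
        ((n : ℝ) * (1 / 2) * (γ n * (1 - γ n))) / ((n : ℝ) ^ 3 * μ1 n ^ 2) *
          (1 / (4 * (1 / 2)) + (1 / 2) * α n / ((1 / 2) * μ1 n * ν2 n ^ 2)))) 1) :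
    TendstoInProb μ (fun n ω => D11til n ω / D11hat n ω)
      (1 / 4 + 3 / 2 * (x / (1 + x ^ 2))) ∧
    (∀ t : ℝ, 0 < t → t ≠ 1 → 1 / 4 + 3 / 2 * (t / (1 + t ^ 2)) < 1) := by
  have hx' : 1 - x ≠ 0 := sub_ne_zero.mpr hx1.symm
  replace hx : 1 + x ≠ 0 := by positivity
  simp only [hlam1, hlam2, hμ1, hν2, hγ] at hhat htil
  refine ⟨htil.div_of_asymptotic hhat ?_, fun t _ ht => by linarith [div_one_add_sq_lt_half ht]⟩
  refine ((tendsto_tildeCoeff_div_hatCoeff hx hx').comp hα0).congr' ?_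
  filter_upwards [eventually_ne_atTop 0] with n hn
  have hn : (n : ℝ) ≠ 0 := Nat.cast_ne_zero.mpr hn
  have ha : α n ≠ 0 := (hαpos n).ne'
  rw [Function.comp_apply, tilde_formula_eq ha, hat_formula_eq,
    mul_div_mul_left _ _ (by positivity)]

/-- Limiting variance ratio for the symmetric blockmodel.
For the two-class blockmodel with `π = 1/2`, `β = α`, `γ = xα` (`x > 0`, `x ≠ 1`) in the
semi-sparse regime, the within-class variances satisfy the asymptotic formulas of
Theorems 3.1–3.2 (assumed as hypotheses), and hence their ratio converges in
probability to `1/4 + (3/2)·x/(1+x²)`, a quantity strictly less than `1` for all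
`x > 0`, `x ≠ 1`. -/
theorem limiting_variance_ratio_symmetric_blockmodel
    {Ω : Type*} [MeasurableSpace Ω] (μ : Measure Ω) [IsProbabilityMeasure μ]
    (x : ℝ) (hx : 0 < x) (hx1 : x ≠ 1)
    (α : ℕ → ℝ) (hαpos : ∀ n, 0 < α n)
    (hα0 : Tendsto α atTop (nhds 0))
    (hsparse : Tendsto (fun n : ℕ => Real.log n / ((n : ℝ) * α n)) atTop (nhds 0))
    (γ : ℕ → ℝ) (hγ : ∀ n, γ n = x * α n)
    -- population eigenvalues and normalized-model parameters for `π = 1/2`, `β = α`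
    (lam1 lam2 μ1 ν2 : ℕ → ℝ)
    (hlam1 : ∀ n : ℕ, lam1 n = (n : ℝ) * (α n + γ n) / 2)
    (hlam2 : ∀ n : ℕ, lam2 n = (n : ℝ) * (α n - γ n) / 2)
    (hμ1 : ∀ n, μ1 n = α n * (1 + x) / 2)
    (hν2 : ∀ n, ν2 n = (1 - x) / (1 + x))
    -- the within-class variances of the two spectral embeddings, with their
    -- asymptotic formulas (the conclusions of the unnormalized/normalized theorems)
    (D11hat D11til : ℕ → Ω → ℝ)
    (hhat : TendstoInProb μ (fun n ω => D11hat n ω /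
      (((1 / (n : ℝ)) / lam1 n ^ 2 + (1 / (n : ℝ)) / lam2 n ^ 2) *
          ((n : ℝ) / 2 * (α n * (1 - α n))) +
        ((1 / (n : ℝ)) / lam1 n ^ 2 + (1 / (n : ℝ)) / lam2 n ^ 2) *
          ((n : ℝ) / 2 * (γ n * (1 - γ n))))) 1)
    (htil : TendstoInProb μ (fun n ω => D11til n ω /
      (((n : ℝ) * (1 / 2) * (α n * (1 - α n))) / ((n : ℝ) ^ 3 * (1 / 2) * μ1 n ^ 2) *
          (1 / 4 + (1 / 2) * γ n / (μ1 n * ν2 n ^ 2)) +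
        ((n : ℝ) * (1 / 2) * (γ n * (1 - γ n))) / ((n : ℝ) ^ 3 * μ1 n ^ 2) *
          (1 / (4 * (1 / 2)) + (1 / 2) * α n / ((1 / 2) * μ1 n * ν2 n ^ 2)))) 1) :
    TendstoInProb μ (fun n ω => D11til n ω / D11hat n ω)
      (1 / 4 + 3 / 2 * (x / (1 + x ^ 2))) ∧
    (∀ t : ℝ, 0 < t → t ≠ 1 → 1 / 4 + 3 / 2 * (t / (1 + t ^ 2)) < 1) :=
  limiting_variance_ratio_symmetric_blockmodel_general μ x hx hx1 α hαpos hα0 γ hγ lam1 lam2 μ1 ν2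
    hlam1 hlam2 hμ1 hν2 D11hat D11til hhat htil
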